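/- Let C be an abelian category with a central charge Z in which every object is both Noetherian and Artinian. Then every nonzero object V of C has a unique nonzero subobject F (the maximal destabilizing subobject) with the following property: F is Z-semistable, and for every nonzero subobject F' of V, either arg Z(F') < arg Z(F), or F' has the same slope as F and F' ≤ F in the lattice of subobjects of V. -/

import Mathlib

open CategoryTheory CategoryTheory.Limits

/-- `arg z ≤ arg w` for arguments taken in `(0, π]`. -/
def argLE (z w : ℂ) : Prop := 0 ≤ ((starRingEnd ℂ) z * w).im

/-- `arg z < arg w` for arguments taken in `(0, π]`. -/
def argLT (z w : ℂ) : Prop := 0 < ((starRingEnd ℂ) z * w).im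

/-- `z` and `w` have the same argument (slope). -/
def sameSlope (z w : ℂ) : Prop := ((starRingEnd ℂ) z * w).im = 0

/-- membership in `H₊ = {z : Im z > 0, or Im z = 0 and Re z < 0}`. -/
def memHPlus (z : ℂ) : Prop := 0 < z.im ∨ (z.im = 0 ∧ z.re < 0)

/-- A central charge on an abelian category: additive on short exact sequences and
taking values in `H₊` on nonzero objects. -/
def IsCentralCharge {C : Type*} [Category C] [Abelian C] (Z : C → ℂ) : Prop :=
  (∀ S : ShortComplex C, S.ShortExact → Z S.X₂ = Z S.X₁ + Z S.X₃) ∧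
  (∀ E : C, ¬ IsZero E → memHPlus (Z E))

/-- A nonzero object `E` is `Z`-semistable if `arg Z(E') ≤ arg Z(E)` for every nonzero
subobject `E'` of `E`. -/
def IsSemistable {C : Type*} [Category C] [Abelian C] (Z : C → ℂ) (E : C) : Prop :=
  ¬ IsZero E ∧ ∀ E' : Subobject E, ¬ IsZero (E' : C) → argLE (Z (E' : C)) (Z E)

/-!
Phases are compared through `Complex.arg`, which on `H₊` takes values in `(0, π]` and orders
values exactly as `argLT` does. The maximal destabilizing subobject of a nonzero `A ≤ V` is built
by Artinian induction on `A`. If no nonzero `B ≤ A` has larger phase than `A`, it is `A` itself.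
Otherwise let `B` be maximal (Noetherian) among such subobjects and `F` the maximal destabilizing
subobject of `B`. A nonzero `F' ≤ A` whose phase is at least that of `F` must lie in `B`: if not,
`B < F' ⊔ B ≤ A` has phase at most that of `A`, so `q = Z (F' ⊔ B) - Z B ∈ H₊` has phase below
that of `B`, and `Z (F' ⊔ B) + Z (F' ⊓ B) = Z F' + Z B` gives `Z F' = q + Z (F' ⊓ B)` with
`F' ⊓ B ≤ B` nonzero of phase above that of `F'`, contradicting the choice of `F`. Uniqueness
follows from the antisymmetry of `Im (conj z * w)`.
-/

section ComplexArg

open Complex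

lemma im_conj_mul (z w : ℂ) : ((starRingEnd ℂ) z * w).im = z.re * w.im - z.im * w.re := by
  simp only [mul_im, conj_re, conj_im]
  ring

lemma im_conj_mul_swap (z w : ℂ) :
    ((starRingEnd ℂ) w * z).im = -((starRingEnd ℂ) z * w).im := by
  rw [im_conj_mul, im_conj_mul]
  ring

lemma im_conj_mul_eq_norm_mul_sin {z w : ℂ} (hz : z ≠ 0) (hw : w ≠ 0) :
    ((starRingEnd ℂ) z * w).im = ‖z‖ * ‖w‖ * Real.sin (w.arg - z.arg) := by
  have hz' : ‖z‖ ≠ 0 := norm_ne_zero_iff.mpr hz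
  have hw' : ‖w‖ ≠ 0 := norm_ne_zero_iff.mpr hw
  rw [im_conj_mul, Real.sin_sub, sin_arg, sin_arg, cos_arg hz, cos_arg hw]
  field_simp

lemma memHPlus.ne_zero {z : ℂ} (hz : memHPlus z) : z ≠ 0 := by
  rintro rfl
  simp [memHPlus] at hz

lemma memHPlus.arg_pos {z : ℂ} (hz : memHPlus z) : 0 < z.arg := by
  rcases hz with him | ⟨him, hre⟩
  · refine (arg_nonneg_iff.mpr him.le).lt_of_ne fun h => ?_
    rw [eq_comm, arg_eq_zero_iff] at h
    exact him.ne' h.2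
  · rw [arg_eq_pi_iff.mpr ⟨hre, him⟩]
    exact Real.pi_pos

lemma argLT_iff_arg_lt {z w : ℂ} (hz : memHPlus z) (hw : memHPlus w) :
    argLT z w ↔ z.arg < w.arg := by
  have := hz.arg_pos
  have := hw.arg_pos
  have := arg_le_pi z
  have := arg_le_pi w
  rw [argLT, im_conj_mul_eq_norm_mul_sin hz.ne_zero hw.ne_zero,
    mul_pos_iff_of_pos_left (by simp [hz.ne_zero, hw.ne_zero])]
  constructor
  · intro h
    by_contra! h'
    exact (Real.sin_nonpos_of_nonpos_of_neg_pi_le (by linarith) (by linarith)).not_gt h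
  · intro h
    exact Real.sin_pos_of_pos_of_lt_pi (by linarith) (by linarith)

lemma argLE_iff_arg_le {z w : ℂ} (hz : memHPlus z) (hw : memHPlus w) :
    argLE z w ↔ z.arg ≤ w.arg := by
  rw [← not_lt, ← argLT_iff_arg_lt hw hz, argLT, argLE, im_conj_mul_swap, not_lt, neg_nonneg]

lemma sameSlope_iff_arg_eq {z w : ℂ} (hz : memHPlus z) (hw : memHPlus w) :
    sameSlope z w ↔ z.arg = w.arg := by
  rw [le_antisymm_iff, ← argLE_iff_arg_le hz hw, ← argLE_iff_arg_le hw hz, sameSlope, argLE,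
    argLE, im_conj_mul_swap w z, neg_nonneg, ← le_antisymm_iff, neg_eq_zero]

lemma argLT_add_left_iff (z w : ℂ) : argLT (z + w) w ↔ argLT z w := by
  rw [argLT, argLT, map_add, add_mul, add_im, im_conj_mul w w]
  ring_nf

lemma argLT_add_right_iff (z w : ℂ) : argLT z (z + w) ↔ argLT z w := by
  rw [argLT, argLT, mul_add, add_im, im_conj_mul z z]
  ring_nf

lemma eq_of_argLT_or_sameSlope_and_le {α : Type*} [PartialOrder α] {a b : α} {z w : ℂ}
    (hab : argLT z w ∨ (sameSlope z w ∧ a ≤ b)) (hba : argLT w z ∨ (sameSlope w z ∧ b ≤ a)) :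
    a = b := by
  simp only [argLT, sameSlope, im_conj_mul_swap z w] at hab hba
  rcases hab with h | ⟨h, hab⟩ <;> rcases hba with h' | ⟨h', hba⟩
  · linarith
  · linarith
  · linarith
  · exact le_antisymm hab hba

end ComplexArg

lemma CategoryTheory.Subobject.isZero_iff_eq_bot {C : Type*} [Category C] [HasZeroMorphisms C]
    [HasZeroObject C] {V : C} {A : Subobject V} :
    IsZero (A : C) ↔ A = ⊥ := by
  refine ⟨fun h => ?_, fun h => h ▸ (isZero_zero C).of_iso Subobject.botCoeIsoZero⟩
  rw [← Subobject.mk_arrow A, Subobject.mk_eq_bot_iff_zero]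
  exact h.eq_of_src _ _

lemma CategoryTheory.Subobject.imageSubobject_biprod_desc_eq_sup {C : Type*} [Category C]
    [Abelian C] {V : C} (A B : Subobject V) :
    imageSubobject (biprod.desc A.arrow (-B.arrow)) = A ⊔ B := by
  refine le_antisymm (imageSubobject_le _
    (biprod.desc (Subobject.ofLE A _ le_sup_left) (-Subobject.ofLE B _ le_sup_right))
    (by ext <;> simp)) (sup_le ?_ ?_)
  · exact Subobject.le_of_comm (biprod.inl ≫ factorThruImageSubobject _) (by simp)
  · exact Subobject.le_of_comm (-(biprod.inr ≫ factorThruImageSubobject _)) (by simp)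

namespace IsCentralCharge

variable {C : Type*} [Category C] [Abelian C] {Z : C → ℂ}

lemma eq_zero_of_isZero (hZ : IsCentralCharge Z) {X : C} (hX : IsZero X) : Z X = 0 := by
  have hse : (ShortComplex.mk (𝟙 X) (𝟙 X) (hX.eq_of_src _ _)).ShortExact :=
    { exact := ShortComplex.exact_of_isZero_X₂ _ hX }
  linear_combination -hZ.1 _ hse

lemma eq_add_cokernel (hZ : IsCentralCharge Z) {X Y : C} (f : X ⟶ Y) [Mono f] :
    Z Y = Z X + Z (cokernel f) :=
  hZ.1 (ShortComplex.mk f (cokernel.π f) (cokernel.condition f))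
    { exact := ShortComplex.exact_of_g_is_cokernel _ (cokernelIsCokernel f) }

lemma congr_iso (hZ : IsCentralCharge Z) {X Y : C} (e : X ≅ Y) : Z X = Z Y := by
  rw [hZ.eq_add_cokernel e.hom, hZ.eq_zero_of_isZero (isZero_cokernel_of_epi _), add_zero]

variable {V : C}

lemma memHPlus_of_ne_bot (hZ : IsCentralCharge Z) {A : Subobject V} (hA : A ≠ ⊥) :
    memHPlus (Z (A : C)) :=
  hZ.2 _ (mt Subobject.isZero_iff_eq_bot.1 hA)

lemma exists_memHPlus_add_of_lt (hZ : IsCentralCharge Z) {A B : Subobject V} (hAB : A < B) :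
    ∃ q, memHPlus q ∧ Z (B : C) = Z (A : C) + q := by
  refine ⟨_, hZ.2 _ fun hcok => hAB.ne ?_, hZ.eq_add_cokernel (Subobject.ofLE A B hAB.le)⟩
  have := Preadditive.epi_of_isZero_cokernel _ hcok
  have := isIso_of_mono_of_epi (Subobject.ofLE A B hAB.le)
  exact le_antisymm hAB.le (Subobject.le_of_comm (inv (Subobject.ofLE A B hAB.le)) (by simp))

/-- `A ⊓ B` is the kernel of `A ⊞ B → V`, whose image is `A ⊔ B`. -/
lemma sup_add_inf (hZ : IsCentralCharge Z) (A B : Subobject V) :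
    Z ↑(A ⊔ B) + Z ↑(A ⊓ B) = Z (A : C) + Z (B : C) := by
  have sq := Subobject.inf_isPullback A B
  set f := biprod.lift (Subobject.ofLE (A ⊓ B) A inf_le_left) (Subobject.ofLE _ B inf_le_right)
  set g := biprod.desc A.arrow (-B.arrow)
  have hfg : f ≫ g = 0 := sq.shortComplex'.zero
  have hexact : (ShortComplex.mk f g hfg).Exact := sq.exact_shortComplex'
  have : Mono f := sq.mono_shortComplex'_f
  let S := ShortComplex.mk f (factorThruImageSubobject g)
    (by rw [← cancel_mono (imageSubobject g).arrow]; simp [hfg])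
  let φ : S ⟶ ShortComplex.mk f g hfg :=
    { τ₁ := 𝟙 _, τ₂ := 𝟙 _, τ₃ := (imageSubobject g).arrow }
  have hsplit : Z ((A : C) ⊞ (B : C)) = Z ↑(A ⊓ B) + Z (imageSubobject g : C) :=
    hZ.1 S { exact := (ShortComplex.exact_iff_of_epi_of_isIso_of_mono φ).2 hexact }
  have hsum : Z ((A : C) ⊞ (B : C)) = Z (A : C) + Z (B : C) :=
    hZ.1 _ (ShortComplex.Splitting.ofHasBinaryBiproduct (A : C) (B : C)).shortExact
  rw [Subobject.imageSubobject_biprod_desc_eq_sup] at hsplit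
  linear_combination hsum - hsplit

lemma arg_lt_arg_inf (hZ : IsCentralCharge Z) {A B : Subobject V} (hA : A ≠ ⊥) (hB : B ≠ ⊥)
    (hAB : ¬A ≤ B) (hsup : (Z ↑(A ⊔ B)).arg < (Z (B : C)).arg)
    (hBA : (Z (B : C)).arg ≤ (Z (A : C)).arg) :
    A ⊓ B ≠ ⊥ ∧ (Z (A : C)).arg < (Z ↑(A ⊓ B)).arg := by
  have memA := hZ.memHPlus_of_ne_bot hA
  have memB := hZ.memHPlus_of_ne_bot hB
  have memS := hZ.memHPlus_of_ne_bot (ne_bot_of_le_ne_bot hA (le_sup_left (b := B)))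
  obtain ⟨q, hq, hZS⟩ := hZ.exists_memHPlus_add_of_lt (right_lt_sup.2 hAB)
  have hZA : Z (A : C) = q + Z ↑(A ⊓ B) := by linear_combination hZS - hZ.sup_add_inf A B
  have hqB : q.arg < (Z (B : C)).arg := by
    rwa [← argLT_iff_arg_lt hq memB, ← argLT_add_left_iff, add_comm, ← hZS,
      argLT_iff_arg_lt memS memB]
  have hqA : q.arg < (Z (A : C)).arg := hqB.trans_le hBA
  have hN : A ⊓ B ≠ ⊥ := by
    intro hN
    rw [hN, hZ.eq_zero_of_isZero (Subobject.isZero_iff_eq_bot.2 rfl), add_zero] at hZA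
    exact hqA.ne (congrArg Complex.arg hZA.symm)
  have memN := hZ.memHPlus_of_ne_bot hN
  refine ⟨hN, ?_⟩
  rwa [← argLT_iff_arg_lt memA memN, hZA, argLT_add_left_iff, ← argLT_add_right_iff, ← hZA,
    argLT_iff_arg_lt hq memA]

end IsCentralCharge

section MaxDestabilizing

variable {C : Type*} [Category C] [Abelian C] {Z : C → ℂ} {V : C}

variable (Z) in
structure IsMaxDestabilizingIn (A F : Subobject V) : Prop where
  le : F ≤ A
  ne_bot : F ≠ ⊥
  arg_lt_or : ∀ F' ≤ A, F' ≠ ⊥ →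
    (Z (F' : C)).arg < (Z (F : C)).arg ∨ ((Z (F' : C)).arg = (Z (F : C)).arg ∧ F' ≤ F)

namespace IsMaxDestabilizingIn

variable {A F : Subobject V}

lemma arg_le (hF : IsMaxDestabilizingIn Z A F) {F' : Subobject V} (hF'A : F' ≤ A)
    (hF' : F' ≠ ⊥) : (Z (F' : C)).arg ≤ (Z (F : C)).arg :=
  (hF.arg_lt_or F' hF'A hF').elim le_of_lt fun h => h.1.le

lemma of_maximal (hZ : IsCentralCharge Z) {B : Subobject V}
    (hB : Maximal (fun B => B ≤ A ∧ B ≠ ⊥ ∧ (Z (A : C)).arg < (Z (B : C)).arg) B)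
    (hF : IsMaxDestabilizingIn Z B F) : IsMaxDestabilizingIn Z A F where
  le := hF.le.trans hB.1.1
  ne_bot := hF.ne_bot
  arg_lt_or F' hF'A hF' := by
    obtain ⟨⟨hBA, hB, hAB⟩, hBmax⟩ := hB
    rcases lt_or_ge (Z (F' : C)).arg (Z (F : C)).arg with hlt | hFF'
    · exact .inl hlt
    refine hF.arg_lt_or F' (by_contra fun hF'B => ?_) hF'
    have hsup : (Z ↑(F' ⊔ B)).arg < (Z (B : C)).arg := by
      by_contra! h
      exact hF'B (le_sup_left.trans
        (hBmax ⟨sup_le hF'A hBA, ne_bot_of_le_ne_bot hB le_sup_right, hAB.trans_le h⟩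
          le_sup_right))
    obtain ⟨hN, hF'N⟩ := hZ.arg_lt_arg_inf hF' hB hF'B hsup ((hF.arg_le le_rfl hB).trans hFF')
    exact (hF'N.trans_le (hF.arg_le inf_le_right hN)).not_ge hFF'

lemma isSemistable (hZ : IsCentralCharge Z) (hF : IsMaxDestabilizingIn Z A F) :
    IsSemistable Z (F : C) := by
  refine ⟨mt Subobject.isZero_iff_eq_bot.1 hF.ne_bot, fun E hE => ?_⟩
  have hZE : Z ↑(Subobject.mk (E.arrow ≫ F.arrow)) = Z (E : C) :=
    hZ.congr_iso (Subobject.underlyingIso _)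
  have hE' : Subobject.mk (E.arrow ≫ F.arrow) ≠ ⊥ := fun h =>
    hE ((Subobject.isZero_iff_eq_bot.2 h).of_iso (Subobject.underlyingIso _).symm)
  rw [← hZE, argLE_iff_arg_le (hZ.memHPlus_of_ne_bot hE') (hZ.memHPlus_of_ne_bot hF.ne_bot)]
  exact hF.arg_le ((Subobject.mk_le_of_comm E.arrow rfl).trans hF.le) hE'

lemma argLT_or_sameSlope (hZ : IsCentralCharge Z) (hF : IsMaxDestabilizingIn Z ⊤ F)
    (F' : Subobject V) (hF' : ¬IsZero (F' : C)) :
    argLT (Z (F' : C)) (Z (F : C)) ∨ (sameSlope (Z (F' : C)) (Z (F : C)) ∧ F' ≤ F) := by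
  rw [argLT_iff_arg_lt (hZ.2 _ hF') (hZ.memHPlus_of_ne_bot hF.ne_bot),
    sameSlope_iff_arg_eq (hZ.2 _ hF') (hZ.memHPlus_of_ne_bot hF.ne_bot)]
  exact hF.arg_lt_or F' le_top (mt Subobject.isZero_iff_eq_bot.2 hF')

end IsMaxDestabilizingIn

lemma exists_isMaxDestabilizingIn (hZ : IsCentralCharge Z) [WellFoundedGT (Subobject V)]
    [WellFoundedLT (Subobject V)] (A : Subobject V) (hA : A ≠ ⊥) :
    ∃ F, IsMaxDestabilizingIn Z A F := by
  induction A using WellFoundedLT.induction with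
  | ind A ih =>
  by_cases h : ∃ B, B ≤ A ∧ B ≠ ⊥ ∧ (Z (A : C)).arg < (Z (B : C)).arg
  · obtain ⟨B, hB⟩ := WellFoundedGT.exists_maximal ‹_› _ h
    obtain ⟨F, hF⟩ := ih B (hB.1.1.lt_of_ne fun hBA => (hBA ▸ hB.1.2.2).false) hB.1.2.1
    exact ⟨F, hF.of_maximal hZ hB⟩
  · push Not at h
    exact ⟨A, le_rfl, hA, fun F' hF'A hF' =>
      (h F' hF'A hF').lt_or_eq.imp_right fun he => ⟨he, hF'A⟩⟩

end MaxDestabilizing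

/-- In an abelian category with a central charge in which all objects are Noetherian
and Artinian, every nonzero object `V` has a unique maximal destabilizing subobject `F`:
`F` is nonzero and `Z`-semistable, and every nonzero subobject `F'` of `V` either has
strictly smaller argument than `F`, or has the same slope as `F` and is contained in `F`. -/
theorem existsUnique_maximal_destabilizing_subobject {C : Type*} [Category C] [Abelian C]
    (Z : C → ℂ) (hZ : IsCentralCharge Z)
    (hNoeth : ∀ X : C, WellFoundedGT (Subobject X))
    (hArt : ∀ X : C, WellFoundedLT (Subobject X))
    (V : C) (hV : ¬ IsZero V) :
    ∃! F : Subobject V, ¬ IsZero (F : C) ∧ IsSemistable Z (F : C) ∧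
      ∀ F' : Subobject V, ¬ IsZero (F' : C) →
        argLT (Z (F' : C)) (Z (F : C)) ∨ (sameSlope (Z (F' : C)) (Z (F : C)) ∧ F' ≤ F) := by
  have := hNoeth V
  have := hArt V
  have := Subobject.nontrivial_of_not_isZero hV
  obtain ⟨F, hF⟩ := exists_isMaxDestabilizingIn hZ (⊤ : Subobject V) top_ne_bot
  have hF0 : ¬IsZero (F : C) := mt Subobject.isZero_iff_eq_bot.1 hF.ne_bot
  refine ⟨F, ⟨hF0, hF.isSemistable hZ, hF.argLT_or_sameSlope hZ⟩, ?_⟩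
  rintro G ⟨hG, -, hGmax⟩
  exact eq_of_argLT_or_sameSlope_and_le (hF.argLT_or_sameSlope hZ G hG) (hGmax F hF0)
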